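/- arXiv:1705.03636 — 10 statements merged into one kernel-verified Lean document; each statement's English description precedes it below -/
import Mathlib

section
/- Let M = (M_1, ..., M_N) be a rank-1 POVM on ℂ^d with M_i = |d_i⟩⟨d_i|, d_i ≠ 0. Then M is an extreme point of the convex set of N-outcome POVMs on ℂ^d if and only if the matrices |d_i⟩⟨d_i|, i = 1,...,N, are linearly independent in the space of d×d matrices. -/
/-!
A nontrivial linear relation among the Hermitian effects `Mᵢ` can be taken real and, after
scaling, with coefficients `tᵢ ∈ [-1, 1]`; then `(1 + tᵢ) Mᵢ` and `(1 - tᵢ) Mᵢ` are two POVMs with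
midpoint `M`. Conversely, if `M` is the midpoint of `M'` and `M''`, then `M'ᵢ ≤ 2 Mᵢ`, and a
positive semidefinite matrix dominated by a rank-one one is a multiple of it, so `M'ᵢ = cᵢ Mᵢ`;
linear independence and `∑ cᵢ Mᵢ = 1 = ∑ Mᵢ` force `cᵢ = 1`.
-/

open Matrix
open scoped ComplexOrder

namespace Matrix

variable {𝕜 n : Type*} [RCLike 𝕜] [Fintype n]

theorem IsHermitian.exists_eq_smul_vecMulVec {A : Matrix n n 𝕜} (hA : A.IsHermitian) {v : n → 𝕜}
    (h : ∀ w, star v ⬝ᵥ w = 0 → A *ᵥ w = 0) :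
    ∃ c : 𝕜, A = c • vecMulVec v (star v) := by
  -- With `P = v v*` and `r = v* v`: `A P = r A` as `A` kills `v^⊥`, so `r r̄ A = P A P ∈ 𝕜 P`.
  by_cases hv : v = 0
  · subst hv
    exact ⟨0, ext_iff_mulVec.2 fun w => by simpa using h w (by simp)⟩
  set P := vecMulVec v (star v)
  set r := star v ⬝ᵥ v
  have hr : r ≠ 0 := mt dotProduct_star_self_eq_zero.mp hv
  have hAP : A * P = r • A := by
    refine ext_iff_mulVec.2 fun w => ?_
    have hw := h (r • w - (star v ⬝ᵥ w) • v) (by simp [r, dotProduct_comm]; ring)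
    rw [mulVec_sub, sub_eq_zero, mulVec_smul, mulVec_smul] at hw
    rw [← mulVec_mulVec, vecMulVec_mulVec, op_smul_eq_smul, mulVec_smul, smul_mulVec, hw]
  have hPA : P * A = star r • A := by
    simpa [P, conjTranspose_mul, hA.eq] using congr(($hAP)ᴴ)
  refine ⟨(star v ⬝ᵥ A *ᵥ v) / (r * star r), ?_⟩
  have hPAP : P * A * P = (star v ⬝ᵥ A *ᵥ v) • P := by
    rw [mul_assoc, mul_vecMulVec, vecMulVec_mul_vecMulVec, vecMulVec_smul]
  have : P * A * P = (r * star r) • A := by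
    rw [hPA, smul_mul_assoc, hAP, smul_smul, mul_comm]
  rw [div_eq_inv_mul, mul_smul, ← hPAP, this, inv_smul_smul₀ (by simpa using hr)]

theorem PosSemidef.exists_eq_smul_vecMulVec_of_add_eq {A B : Matrix n n 𝕜}
    (hA : A.PosSemidef) (hB : B.PosSemidef) {c : 𝕜} {v : n → 𝕜}
    (h : A + B = c • vecMulVec v (star v)) : ∃ a : 𝕜, A = a • vecMulVec v (star v) := by
  refine hA.isHermitian.exists_eq_smul_vecMulVec fun w hw => ?_
  have hsum : star w ⬝ᵥ A *ᵥ w + star w ⬝ᵥ B *ᵥ w = 0 := by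
    rw [← dotProduct_add, ← add_mulVec, h, smul_mulVec, vecMulVec_mulVec, hw]
    simp
  rw [← hA.dotProduct_mulVec_zero_iff]
  exact ((add_eq_zero_iff_of_nonneg (hA.dotProduct_mulVec_nonneg w)
    (hB.dotProduct_mulVec_nonneg w)).mp hsum).1

end Matrix

section

variable {ι 𝕜 E : Type*} [Fintype ι] [RCLike 𝕜] [AddCommGroup E] [Module 𝕜 E] [StarAddMonoid E]
  [StarModule 𝕜 E]

theorem sum_re_smul_eq_zero_of_isSelfAdjoint {x : ι → E} (hx : ∀ i, IsSelfAdjoint (x i))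
    {g : ι → 𝕜} (h : ∑ i, g i • x i = 0) : ∑ i, (RCLike.re (g i) : 𝕜) • x i = 0 := by
  have hstar : ∑ i, star (g i) • x i = 0 := by
    simpa [star_sum, star_smul, (hx _).star_eq] using congr(star $h)
  simp only [RCLike.re_eq_add_conj, div_eq_mul_inv, mul_comm _ (2 : 𝕜)⁻¹, mul_smul, add_smul,
    ← Finset.smul_sum, Finset.sum_add_distrib]
  simpa [h, RCLike.star_def] using hstar

theorem exists_sum_ofReal_smul_eq_zero_of_not_linearIndependent {x : ι → E}
    (hx : ∀ i, IsSelfAdjoint (x i)) (h : ¬LinearIndependent 𝕜 x) :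
    ∃ t : ι → ℝ, t ≠ 0 ∧ ∑ i, (t i : 𝕜) • x i = 0 := by
  obtain ⟨g, hg, i, hgi⟩ := Fintype.not_linearIndependent_iff.mp h
  by_cases hre : RCLike.re (g i) = 0
  · refine ⟨fun i => RCLike.im (g i), fun him => hgi (RCLike.ext (by simpa using hre)
      (by simpa using congr_fun him i)), ?_⟩
    have := sum_re_smul_eq_zero_of_isSelfAdjoint hx (g := fun i => -RCLike.I * g i)
      (by simp [mul_smul, ← Finset.smul_sum, hg])
    simpa [neg_mul, RCLike.I_mul_re] using this
  · exact ⟨fun i => RCLike.re (g i), fun hre' => hre (congr_fun hre' i),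
      sum_re_smul_eq_zero_of_isSelfAdjoint hx hg⟩

end

section POVM

variable {ι 𝕜 n : Type*} [Fintype ι] [RCLike 𝕜] [DecidableEq n]

def IsPOVM (M : ι → Matrix n n 𝕜) : Prop :=
  (∀ i, (M i).PosSemidef) ∧ ∑ i, M i = 1

def IsExtremePOVM (M : ι → Matrix n n 𝕜) : Prop :=
  IsPOVM M ∧ ∀ M' M'' : ι → Matrix n n 𝕜, IsPOVM M' → IsPOVM M'' →
    M = (1 / 2 : 𝕜) • M' + (1 / 2 : 𝕜) • M'' → M' = M ∧ M'' = M

theorem IsPOVM.one_add_smul {M : ι → Matrix n n 𝕜} (hM : IsPOVM M) {t : ι → ℝ}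
    (ht : ∀ i, |t i| ≤ 1) (hrel : ∑ i, t i • M i = 0) :
    IsPOVM fun i => (1 + t i) • M i :=
  ⟨fun i => (hM.1 i).smul (neg_le_iff_add_nonneg'.1 (neg_le_of_abs_le (ht i))), by
    simp only [add_smul, one_smul, Finset.sum_add_distrib, hM.2, hrel, add_zero]⟩

theorem IsExtremePOVM.linearIndependent {M : ι → Matrix n n 𝕜} (hM : IsExtremePOVM M)
    (hM0 : ∀ i, M i ≠ 0) : LinearIndependent 𝕜 M := by
  by_contra hli
  obtain ⟨t, ht0, ht⟩ := exists_sum_ofReal_smul_eq_zero_of_not_linearIndependent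
    (fun i => (hM.1.1 i).isHermitian.isSelfAdjoint) hli
  set s := ‖t‖⁻¹ • t
  have hs0 : s ≠ 0 := smul_ne_zero (inv_ne_zero (norm_ne_zero_iff.2 ht0)) ht0
  have hs1 : ∀ i, |s i| ≤ 1 := fun i =>
    (norm_le_pi_norm s i).trans (by simp [s, norm_smul, ht0])
  replace ht : ∑ i, t i • M i = 0 := by simpa using ht
  have hs : ∑ i, s i • M i = 0 := by
    simp only [s, Pi.smul_apply, smul_eq_mul, mul_smul, ← Finset.smul_sum, ht, smul_zero]
  obtain ⟨hM', -⟩ := hM.2 _ _ (hM.1.one_add_smul hs1 hs)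
    (hM.1.one_add_smul (t := -s) (by simpa using hs1) (by simpa using hs))
    (by funext i; simp only [Pi.neg_apply, Pi.add_apply, Pi.smul_apply]; module)
  refine hs0 (funext fun i => ?_)
  simpa [add_smul, hM0 i] using congr_fun hM' i

theorem IsPOVM.isExtremePOVM_of_linearIndependent [Fintype n] {M : ι → Matrix n n 𝕜}
    (hM : IsPOVM M) {v : ι → n → 𝕜} (hMv : ∀ i, M i = vecMulVec (v i) (star (v i)))
    (hli : LinearIndependent 𝕜 M) : IsExtremePOVM M := by
  refine ⟨hM, fun M' M'' hM' hM'' hmid => ?_⟩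
  have hadd : ∀ i, M' i + M'' i = (2 : 𝕜) • M i := fun i => by
    simp only [hmid, Pi.add_apply, Pi.smul_apply]; module
  have hsmul : ∀ i, ∃ c : 𝕜, M' i = c • M i := fun i => by
    have h := hadd i
    rw [hMv i] at h ⊢
    exact (hM'.1 i).exists_eq_smul_vecMulVec_of_add_eq (hM''.1 i) h
  choose c hc using hsmul
  have hc1 : ∀ i, c i = 1 := Fintype.linearIndependent_iffₛ.mp hli c 1 (by
    simp only [← hc, hM'.2, Pi.one_apply, one_smul, hM.2])
  have hM'M : M' = M := funext fun i => by rw [hc, hc1, one_smul]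
  refine ⟨hM'M, funext fun i => ?_⟩
  have := hadd i
  rw [hM'M, two_smul] at this
  exact add_left_cancel this

end POVM

/-- A rank-1 POVM is extreme iff its effects are linearly independent. -/
theorem rank1_extreme_iff_linearIndependent
    (d N : ℕ)
    (v : Fin N → Fin d → ℂ) (hv : ∀ i, v i ≠ 0)
    (M : Fin N → Matrix (Fin d) (Fin d) ℂ)
    (hrank1 : ∀ i, M i = vecMulVec (v i) (star (v i)))
    (hMsum : ∑ i, M i = 1) :
    (∀ M' M'' : Fin N → Matrix (Fin d) (Fin d) ℂ,
        (∀ i, (M' i).PosSemidef) → ∑ i, M' i = 1 →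
        (∀ i, (M'' i).PosSemidef) → ∑ i, M'' i = 1 →
        M = (1/2 : ℂ) • M' + (1/2 : ℂ) • M'' → M' = M ∧ M'' = M)
      ↔ LinearIndependent ℂ M := by
  have hM : IsPOVM M := ⟨fun i => hrank1 i ▸ posSemidef_vecMulVec_self_star (v i), hMsum⟩
  have hM0 : ∀ i, M i ≠ 0 := fun i => hrank1 i ▸ vecMulVec_ne_zero (hv i) (star_ne_zero.2 (hv i))
  refine ⟨fun H => ?_, fun hli M' M'' hP' hS' hP'' hS'' => ?_⟩
  · exact IsExtremePOVM.linearIndependent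
      ⟨hM, fun M' M'' hM' hM'' => H M' M'' hM'.1 hM'.2 hM''.1 hM''.2⟩ hM0
  · exact (hM.isExtremePOVM_of_linearIndependent hrank1 hli).2 M' M'' ⟨hP', hS'⟩ ⟨hP'', hS''⟩
end

section
/- Every projection-valued measure is extreme in the convex set of POVMs: if P = (P_1, ..., P_N) is a PVM on a Hilbert space H (each P_i an orthogonal projection, P_i P_j = δ_{ij} P_i, ∑ P_i = I) and P = t M' + (1-t) M'' for POVMs M', M'' and t ∈ (0,1), then M' = M'' = P. -/
/-!
Each `P i` is idempotent, and both `P i` and `1 - P i` are the same convex combination of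
positive operators: `M' i, M'' i` and `1 - M' i, 1 - M'' i` respectively. A convex combination
of positive operators kills a vector only if every summand does, so `M' i` and `M'' i` vanish on
the range of `1 - P i` and are the identity on the range of `P i`, i.e. they equal `P i`.
-/

open scoped InnerProductSpace

namespace ContinuousLinearMap

variable {𝕜 E : Type*} [RCLike 𝕜] [NormedAddCommGroup E] [InnerProductSpace 𝕜 E]

theorem IsPositive.apply_eq_zero_of_re_inner_eq_zero {T : E →L[𝕜] E} (hT : T.IsPositive)
    {x : E} (hx : RCLike.re ⟪T x, x⟫_𝕜 = 0) : T x = 0 := by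
  -- Cauchy–Schwarz for the semi-inner product `(a, b) ↦ ⟪a, T b⟫` at `T x` and `x`.
  let form : PreInnerProductSpace.Core 𝕜 E :=
    { inner a b := ⟪a, T b⟫_𝕜
      conj_inner_symm a b := by simp only [inner_conj_symm, hT.inner_left_eq_inner_right]
      re_inner_nonneg := hT.re_inner_nonneg_right
      add_left _ _ _ := inner_add_left _ _ _
      smul_left _ _ _ := inner_smul_left _ _ _ }
  have hcs : ‖⟪T x, T x⟫_𝕜‖ * ‖⟪x, T (T x)⟫_𝕜‖ ≤
      RCLike.re ⟪T x, T (T x)⟫_𝕜 * RCLike.re ⟪x, T x⟫_𝕜 :=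
    @InnerProductSpace.Core.inner_mul_inner_self_le 𝕜 E _ _ _ form (T x) x
  rw [← hT.inner_left_eq_inner_right x (T x), ← hT.inner_left_eq_inner_right x x, hx, mul_zero,
    ← sq] at hcs
  exact inner_self_eq_zero.mp (norm_eq_zero.mp (pow_eq_zero_iff two_ne_zero |>.mp
    (le_antisymm hcs (sq_nonneg _))))

theorem IsPositive.apply_eq_zero_of_add_apply_eq_zero {S T : E →L[𝕜] E} (hS : S.IsPositive)
    (hT : T.IsPositive) {x : E} (hx : (S + T) x = 0) : S x = 0 ∧ T x = 0 := by
  have hsum : RCLike.re ⟪S x, x⟫_𝕜 + RCLike.re ⟪T x, x⟫_𝕜 = 0 := by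
    rw [← map_add, ← inner_add_left, ← add_apply, hx, inner_zero_left, map_zero]
  have hS0 := hS.re_inner_nonneg_left x
  have hT0 := hT.re_inner_nonneg_left x
  exact ⟨hS.apply_eq_zero_of_re_inner_eq_zero (by linarith),
    hT.apply_eq_zero_of_re_inner_eq_zero (by linarith)⟩

theorem IsPositive.apply_eq_zero_of_smul_add_smul_apply_eq_zero {S T : E →L[𝕜] E}
    (hS : S.IsPositive) (hT : T.IsPositive) {a b : ℝ} (ha : 0 < a) (hb : 0 ≤ b) {x : E}
    (hx : ((a : 𝕜) • S + (b : 𝕜) • T) x = 0) : S x = 0 := by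
  have haS : ((a : 𝕜) • S) x = 0 :=
    (hS.smul_of_nonneg (RCLike.ofReal_nonneg.mpr ha.le)).apply_eq_zero_of_add_apply_eq_zero
      (hT.smul_of_nonneg (RCLike.ofReal_nonneg.mpr hb)) hx |>.1
  rw [smul_apply, smul_eq_zero] at haS
  exact haS.resolve_left (RCLike.ofReal_ne_zero.mpr ha.ne')

theorem one_sub_isPositive_of_sum_eq_one {ι : Type*} [Fintype ι] {M : ι → E →L[𝕜] E}
    (hM : ∀ i, (M i).IsPositive) (hsum : ∑ i, M i = 1) (i : ι) : (1 - M i).IsPositive := by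
  classical
  rw [← hsum, ← Finset.sum_erase_eq_sub (Finset.mem_univ i)]
  exact isPositive_sum _ fun j _ => hM j

theorem eq_of_isIdempotentElem_of_eq_smul_add_smul {P S T : E →L[𝕜] E}
    (hP : IsIdempotentElem P) (hS : S.IsPositive) (hT : T.IsPositive)
    (hS₁ : (1 - S).IsPositive) (hT₁ : (1 - T).IsPositive) {t : ℝ} (ht₀ : 0 < t)
    (ht₁ : t < 1)
    (h : P = (t : 𝕜) • S + ((1 - t : ℝ) : 𝕜) • T) : S = P := by
  have h₁ : 1 - P = (t : 𝕜) • (1 - S) + ((1 - t : ℝ) : 𝕜) • (1 - T) := by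
    rw [h, RCLike.ofReal_sub, RCLike.ofReal_one]
    module
  have hPP (y : E) : P (P y) = P y := DFunLike.congr_fun hP.eq y
  ext x
  have hker : S (x - P x) = 0 :=
    hS.apply_eq_zero_of_smul_add_smul_apply_eq_zero hT ht₀ (b := 1 - t) (by linarith) <| by
      rw [← h, map_sub, hPP, sub_self]
  have hfix : (1 - S) (P x) = 0 :=
    hS₁.apply_eq_zero_of_smul_add_smul_apply_eq_zero hT₁ ht₀ (b := 1 - t) (by linarith) <| by
      rw [← h₁, sub_apply, one_apply_eq_self, hPP, sub_self]
  rw [sub_apply, one_apply_eq_self, sub_eq_zero, eq_comm] at hfix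
  calc S x = S (P x) + S (x - P x) := by rw [← map_add, add_sub_cancel]
    _ = P x := by rw [hker, add_zero, hfix]

end ContinuousLinearMap

open ContinuousLinearMap in
theorem pvm_extreme_general
    {H : Type*} [NormedAddCommGroup H] [InnerProductSpace ℂ H]
    (N : ℕ) (P M' M'' : Fin N → H →L[ℂ] H)
    (hPorth : ∀ i j, P i * P j = if i = j then P i else 0)
    (hM'pos : ∀ i, (M' i).IsPositive) (hM'sum : ∑ i, M' i = 1)
    (hM''pos : ∀ i, (M'' i).IsPositive) (hM''sum : ∑ i, M'' i = 1)
    (t : ℝ) (ht0 : 0 < t) (ht1 : t < 1)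
    (hconv : ∀ i, P i = (t : ℂ) • M' i + ((1 - t : ℝ) : ℂ) • M'' i) :
    M' = P ∧ M'' = P := by
  have hP (i : Fin N) : IsIdempotentElem (P i) := (hPorth i i).trans (if_pos rfl)
  have hM'₁ := one_sub_isPositive_of_sum_eq_one hM'pos hM'sum
  have hM''₁ := one_sub_isPositive_of_sum_eq_one hM''pos hM''sum
  refine ⟨funext fun i => ?_, funext fun i => ?_⟩
  · exact eq_of_isIdempotentElem_of_eq_smul_add_smul (hP i) (hM'pos i) (hM''pos i) (hM'₁ i)
      (hM''₁ i) ht0 ht1 (hconv i)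
  · refine eq_of_isIdempotentElem_of_eq_smul_add_smul (hP i) (hM''pos i) (hM'pos i) (hM''₁ i)
      (hM'₁ i) (t := 1 - t) (by linarith) (by linarith) ?_
    simpa [add_comm] using hconv i

/-- Every PVM is extreme in the convex set of POVMs. -/
theorem pvm_extreme
    {H : Type*} [NormedAddCommGroup H] [InnerProductSpace ℂ H] [CompleteSpace H]
    (N : ℕ) (P M' M'' : Fin N → H →L[ℂ] H)
    (hPsa : ∀ i, IsSelfAdjoint (P i))
    (hPorth : ∀ i j, P i * P j = if i = j then P i else 0)
    (hPsum : ∑ i, P i = 1)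
    (hM'pos : ∀ i, (M' i).IsPositive) (hM'sum : ∑ i, M' i = 1)
    (hM''pos : ∀ i, (M'' i).IsPositive) (hM''sum : ∑ i, M'' i = 1)
    (t : ℝ) (ht0 : 0 < t) (ht1 : t < 1)
    (hconv : ∀ i, P i = (t : ℂ) • M' i + ((1 - t : ℝ) : ℂ) • M'' i) :
    M' = P ∧ M'' = P :=
  pvm_extreme_general N P M' M'' hPorth hM'pos hM'sum hM''pos hM''sum t ht0 ht1 hconv
end

section
/- A nontrivial POVM on ℂ^d cannot be both informationally complete and have the eigenvalue-1 property, for d ≥ 2: if M = (M_1, ..., M_N) is a POVM on ℂ^d (d ≥ 2) such that every nonzero M_i has eigenvalue 1, then M is not informationally complete. -/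
open Matrix
open scoped ComplexOrder

/-!
A nonzero effect `M i₀` fixes some unit vector `u`. Since `∑ i, ⟪u, M i u⟫ = ‖u‖² = ⟪u, M i₀ u⟫`
and every term is nonnegative, `M i u = 0` for all `i ≠ i₀`, so `u` is a common eigenvector of
all effects. For any `v ≠ 0` orthogonal to `u` (which exists as `d ≥ 2`), the nonzero Hermitian
matrix `u v* + v u*` then satisfies `tr((u v* + v u*) M i) = ⟪v, M i u⟫ + ⟪M i u, v⟫ = 0` for every
`i`.
-/

namespace Matrix

variable {𝕜 n ι : Type*} [RCLike 𝕜] [Fintype n]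

theorem exists_ne_zero_dotProduct_eq_zero {K : Type*} [Field K]
    (hn : 1 < Fintype.card n) (u : n → K) : ∃ v ≠ 0, u ⬝ᵥ v = 0 := by
  classical
  have hker : LinearMap.ker (dotProductEquiv K n u) ≠ ⊥ :=
    LinearMap.ker_ne_bot_of_finrank_lt (by simpa using hn)
  obtain ⟨v, hv, hv0⟩ := Submodule.exists_mem_ne_zero_of_ne_bot hker
  exact ⟨v, hv0, hv⟩

theorem PosSemidef.mulVec_eq_zero_of_sum_eq_one [Fintype ι] [DecidableEq n]
    {M : ι → Matrix n n 𝕜} (hM : ∀ i, (M i).PosSemidef) (hsum : ∑ i, M i = 1)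
    {i₀ : ι} {u : n → 𝕜} (hu : M i₀ *ᵥ u = u) {j : ι} (hj : j ≠ i₀) : M j *ᵥ u = 0 := by
  classical
  have hrest : ∑ i ∈ Finset.univ.erase i₀, star u ⬝ᵥ M i *ᵥ u = 0 := by
    have htotal : ∑ i, star u ⬝ᵥ M i *ᵥ u = star u ⬝ᵥ u := by
      simp_rw [← dotProduct_sum, ← sum_mulVec, hsum, one_mulVec]
    rw [← Finset.add_sum_erase _ _ (Finset.mem_univ i₀), hu] at htotal
    simpa using htotal
  rw [Finset.sum_eq_zero_iff_of_nonneg fun i _ => (hM i).dotProduct_mulVec_nonneg u] at hrest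
  exact ((hM j).dotProduct_mulVec_zero_iff u).mp (hrest j (by simpa using hj))

theorem trace_vecMulVec_mul (a b : n → 𝕜) (A : Matrix n n 𝕜) :
    (vecMulVec a b * A).trace = b ⬝ᵥ A *ᵥ a := by
  rw [vecMulVec_mul, trace_vecMulVec, dotProduct_comm, ← dotProduct_mulVec]

theorem exists_isHermitian_ne_zero_trace_mul_eq_zero_of_common_eigenvector
    (hn : 1 < Fintype.card n) {M : ι → Matrix n n 𝕜} (hM : ∀ i, (M i).IsHermitian)
    {u : n → 𝕜} (hu : u ≠ 0) (heig : ∀ i, ∃ c : 𝕜, M i *ᵥ u = c • u) :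
    ∃ T : Matrix n n 𝕜, T.IsHermitian ∧ T ≠ 0 ∧ ∀ i, (T * M i).trace = 0 := by
  obtain ⟨v, hv, huv⟩ := exists_ne_zero_dotProduct_eq_zero hn (star u)
  have hvu : star v ⬝ᵥ u = 0 := by rw [star_dotProduct, huv, star_zero]
  refine ⟨vecMulVec u (star v) + vecMulVec v (star u), ?_, ?_, fun i => ?_⟩
  · rw [IsHermitian, conjTranspose_add, conjTranspose_vecMulVec, conjTranspose_vecMulVec,
      star_star, star_star, add_comm]
  · intro hT
    have h := congrArg (· *ᵥ v) hT
    simp only [add_mulVec, vecMulVec_mulVec, huv, zero_mulVec, op_smul_eq_smul, zero_smul,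
      add_zero, smul_eq_zero, dotProduct_star_self_eq_zero] at h
    exact h.elim hv hu
  · obtain ⟨c, hc⟩ := heig i
    have hstar : star u ᵥ* M i = star (c • u) := by
      rw [← hc, star_mulVec, (hM i).eq]
    rw [add_mul, trace_add, trace_vecMulVec_mul, trace_vecMulVec_mul, hc, dotProduct_smul,
      hvu, dotProduct_mulVec, hstar, star_smul, smul_dotProduct, huv]
    simp

end Matrix

/-- For d ≥ 2, a POVM on ℂ^d with the eigenvalue-1 property is never
informationally complete. -/
theorem eigenvalue1_not_infoComplete
    (d N : ℕ) (hd : 2 ≤ d)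
    (M : Fin N → Matrix (Fin d) (Fin d) ℂ)
    (hMpos : ∀ i, (M i).PosSemidef) (hMsum : ∑ i, M i = 1)
    (heig : ∀ i, M i ≠ 0 →
      ∃ φ : Fin d → ℂ, star φ ⬝ᵥ φ = 1 ∧ (M i).mulVec φ = φ) :
    ¬ (∀ T : Matrix (Fin d) (Fin d) ℂ, T.IsHermitian →
        (∀ i, (T * M i).trace = 0) → T = 0) := by
  intro hIC
  have : NeZero d := ⟨by omega⟩
  obtain ⟨i₀, -, hi₀⟩ : ∃ i₀ ∈ Finset.univ, M i₀ ≠ 0 :=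
    Finset.exists_ne_zero_of_sum_ne_zero (hMsum ▸ one_ne_zero)
  obtain ⟨u, hu1, hu⟩ := heig i₀ hi₀
  have hu0 : u ≠ 0 := by rintro rfl; simp at hu1
  have hcommon : ∀ i, ∃ c : ℂ, M i *ᵥ u = c • u := fun i => by
    by_cases hi : i = i₀
    · exact ⟨1, by rw [hi, hu, one_smul]⟩
    · exact ⟨0, by rw [PosSemidef.mulVec_eq_zero_of_sum_eq_one hMpos hMsum hu hi, zero_smul]⟩
  obtain ⟨T, hTherm, hT0, htr⟩ :=
    exists_isHermitian_ne_zero_trace_mul_eq_zero_of_common_eigenvector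
      (by rwa [Fintype.card_fin]) (fun i => (hMpos i).1) hu0 hcommon
  exact hT0 (hIC T hTherm htr)
end

section
/- Let E ∈ L(H) with 0 ≤ E ≤ I and let R be an orthogonal projection on a Hilbert space H. If RER is an orthogonal projection, then E and R commute. -/
open scoped ComplexOrder

/-!
Since `0 ≤ E ≤ 1`, also `E² ≤ E`. The defect `S = ER - RER` satisfies
`S* S = RE²R - RERER = RE²R - RER ≤ 0` because `RER` is idempotent, so `S = 0` by the
C*-identity. Hence `ER = RER`, and taking adjoints `RE = RER`.
-/

lemma IsStarProjection.star_mul_self_mul_sub_mul_mul {A : Type*} [NonUnitalRing A] [StarRing A]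
    {p e : A} (hp : IsStarProjection p) (he : IsSelfAdjoint e)
    (hpep : IsIdempotentElem (p * e * p)) :
    star (e * p - p * e * p) * (e * p - p * e * p) = p * (e * e) * p - p * e * p := by
  have hpp (x : A) : p * (p * x) = p * x := by rw [← mul_assoc, hp.isIdempotentElem.eq]
  have hpepep : p * (e * (p * (e * p))) = p * (e * p) := by
    simpa only [mul_assoc, hpp] using hpep.eq
  simp only [star_sub, star_mul, he.star_eq, hp.isSelfAdjoint.star_eq, sub_mul, mul_sub,
    mul_assoc, hpp, hpepep]
  abel

section CStarRing

variable {A : Type*} [NonUnitalNormedRing A] [StarRing A] [CStarRing A]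
  [PartialOrder A] [StarOrderedRing A]

lemma eq_zero_of_star_mul_self_nonpos {s : A} (hs : star s * s ≤ 0) : s = 0 :=
  CStarRing.star_mul_self_eq_zero_iff s |>.mp <| le_antisymm hs (star_mul_self_nonneg s)

lemma IsStarProjection.commute_of_isIdempotentElem_mul_mul {p e : A} (hp : IsStarProjection p)
    (he : IsSelfAdjoint e) (hee : e * e ≤ e) (hpep : IsIdempotentElem (p * e * p)) :
    Commute e p := by
  have hdefect : e * p - p * e * p = 0 := by
    refine eq_zero_of_star_mul_self_nonpos ?_
    rw [hp.star_mul_self_mul_sub_mul_mul he hpep, sub_nonpos]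
    exact hp.isSelfAdjoint.conjugate_le_conjugate hee
  have hep : e * p = p * e * p := sub_eq_zero.mp hdefect
  have hpe : p * e = p * e * p := by
    simpa only [star_mul, he.star_eq, hp.isSelfAdjoint.star_eq, mul_assoc]
      using congrArg star hep
  exact hep.trans hpe.symm

end CStarRing

lemma CStarAlgebra.mul_self_le_self {A : Type*} [CStarAlgebra A] [PartialOrder A]
    [StarOrderedRing A] {a : A} (ha₀ : 0 ≤ a) (ha₁ : a ≤ 1) : a * a ≤ a := by
  simpa only [sq, pow_one] using CStarAlgebra.pow_antitone ha₀ ha₁ (by norm_num : 1 ≤ 2)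

/-- If E is an effect, R a projection, and RER is a projection, then E and R
commute. -/
theorem effect_commutes_of_compression_proj
    (d : ℕ) (E R : Matrix (Fin d) (Fin d) ℂ)
    (hE0 : E.PosSemidef) (hE1 : (1 - E).PosSemidef)
    (hRh : R.IsHermitian) (hR2 : R * R = R)
    (hRER : (R * E * R) * (R * E * R) = R * E * R) :
    E * R = R * E := by
  open scoped MatrixOrder Matrix.Norms.L2Operator in
  exact IsStarProjection.commute_of_isIdempotentElem_mul_mul ⟨hR2, hRh.isSelfAdjoint⟩
    hE0.isHermitian.isSelfAdjoint
    (CStarAlgebra.mul_self_le_self hE0.nonneg (Matrix.le_iff.mpr hE1)) hRER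
end

section
/- Let Φ : M_d(ℂ) → M_k(ℂ) be a unital 2-positive map with support projection R (the minimal projection with Φ(R) = I, satisfying Φ(A) = Φ(RAR) for all A, and Φ(A) = 0 iff RAR = 0 for effects A). If A is an effect (0 ≤ A ≤ I) such that Φ(A) is a projection, then RAR is a projection, RA = AR, and A = RAR + R^⊥ A R^⊥. -/
/-!
Kadison–Schwarz gives `Φ(A²) ≥ Φ(A)² = Φ(A)`, while `A - A² ≥ 0` for an effect, so
`Φ(A - A²) = 0` and the support property yields `R A² R = R A R`. The same argument applied to
the effect `RAR`, which has `Φ(RAR) = Φ(A)`, shows that `RAR` is a projection. Then the corner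
`X = R A R^⊥` satisfies `X X* = R A² R - (RAR)² = 0`, so `A` is block diagonal with respect to `R`.
-/

open Matrix
open scoped ComplexOrder MatrixOrder

variable {𝕜 n m : Type*} [RCLike 𝕜] [Fintype n] [DecidableEq n]

namespace IsStarProjection

variable {α : Type*} [Ring α] [StarRing α] {p a : α}

lemma mul_mul_one_sub_mul_star (hp : IsStarProjection p) (ha : IsSelfAdjoint a) :
    p * a * (1 - p) * star (p * a * (1 - p)) = p * (a * a) * p - p * a * p * (p * a * p) := by
  have hp' : star (1 - p) = 1 - p := hp.one_sub.isSelfAdjoint.star_eq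
  calc p * a * (1 - p) * star (p * a * (1 - p))
      = p * a * ((1 - p) * (1 - p)) * a * p := by
        rw [star_mul, star_mul, hp', ha.star_eq, hp.isSelfAdjoint.star_eq]; noncomm_ring
    _ = p * (a * a) * p - p * a * (p * p) * a * p := by
        rw [hp.one_sub.isIdempotentElem.eq, hp.isIdempotentElem.eq]; noncomm_ring
    _ = p * (a * a) * p - p * a * p * (p * a * p) := by noncomm_ring

lemma mul_mul_one_sub_eq_zero {P A : Matrix n n 𝕜} (hP : IsStarProjection P)
    (hA : A.IsHermitian) (hsq : P * (A * A) * P = P * A * P)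
    (hidem : IsIdempotentElem (P * A * P)) : P * A * (1 - P) = 0 := by
  refine self_mul_conjTranspose_eq_zero.mp ?_
  rw [← star_eq_conjTranspose, hP.mul_mul_one_sub_mul_star hA, hsq, hidem.eq, sub_self]

end IsStarProjection

section

variable {α : Type*} [Ring α] [StarRing α] {p a : α}

lemma one_sub_mul_mul_eq_zero_of_mul_mul_one_sub_eq_zero (hp : IsSelfAdjoint p)
    (ha : IsSelfAdjoint a) (h : p * a * (1 - p) = 0) : (1 - p) * a * p = 0 := by
  simpa only [star_mul, star_sub, star_one, hp.star_eq, ha.star_eq, star_zero, mul_assoc]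
    using congr_arg star h

lemma commute_of_mul_mul_one_sub_eq_zero (hp : IsSelfAdjoint p) (ha : IsSelfAdjoint a)
    (h : p * a * (1 - p) = 0) : Commute p a := by
  have h' := one_sub_mul_mul_eq_zero_of_mul_mul_one_sub_eq_zero hp ha h
  calc p * a = p * a * p + p * a * (1 - p) := by noncomm_ring
    _ = p * a * p + (1 - p) * a * p := by rw [h, h']
    _ = a * p := by noncomm_ring

lemma eq_add_of_mul_mul_one_sub_eq_zero (hp : IsSelfAdjoint p) (ha : IsSelfAdjoint a)
    (h : p * a * (1 - p) = 0) : a = p * a * p + (1 - p) * a * (1 - p) := by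
  have h' := one_sub_mul_mul_eq_zero_of_mul_mul_one_sub_eq_zero hp ha h
  calc a = p * a * p + p * a * (1 - p) + (1 - p) * a * p + (1 - p) * a * (1 - p) := by
        noncomm_ring
    _ = p * a * p + (1 - p) * a * (1 - p) := by rw [h, h', add_zero, add_zero]

end

namespace Matrix

def IsTwoPositive (Φ : Matrix n n 𝕜 →ₗ[𝕜] Matrix m m 𝕜) : Prop :=
  ∀ A B C D : Matrix n n 𝕜, (fromBlocks A B C D).PosSemidef →
    (fromBlocks (Φ A) (Φ B) (Φ C) (Φ D)).PosSemidef

lemma PosSemidef.fromBlocks_zero {A : Matrix n n 𝕜} (hA : A.PosSemidef) :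
    (fromBlocks A 0 0 0 : Matrix (n ⊕ n) (n ⊕ n) 𝕜).PosSemidef := by
  convert hA.conjTranspose_mul_mul_same (fromCols (1 : Matrix n n 𝕜) (0 : Matrix n n 𝕜)) using 1
  ext (i | i) (j | j) <;> simp [conjTranspose_fromCols_eq_fromRows_conjTranspose]

lemma IsHermitian.posSemidef_fromBlocks_one_self {B : Matrix n n 𝕜} (hB : B.IsHermitian) :
    (Matrix.fromBlocks 1 B B (B * B)).PosSemidef := by
  convert posSemidef_conjTranspose_mul_self
    (Matrix.fromBlocks (1 : Matrix n n 𝕜) B (0 : Matrix n n 𝕜) 0) using 1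
  rw [fromBlocks_conjTranspose, fromBlocks_multiply]
  simp [hB.eq]

lemma sub_mul_self_nonneg {B : Matrix n n 𝕜} (hB0 : 0 ≤ B) (hB1 : B ≤ 1) : 0 ≤ B - B * B := by
  simpa only [mul_sub, mul_one] using
    Commute.mul_nonneg hB0 (sub_nonneg.mpr hB1) ((Commute.one_right B).sub_right (Commute.refl B))

namespace IsTwoPositive

variable {Φ : Matrix n n 𝕜 →ₗ[𝕜] Matrix m m 𝕜} (hΦ : IsTwoPositive Φ)
include hΦ

lemma posSemidef_map {B : Matrix n n 𝕜} (hB : B.PosSemidef) : (Φ B).PosSemidef :=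
  (hΦ _ _ _ _ hB.fromBlocks_zero).submatrix Sum.inl

lemma isHermitian_map {B : Matrix n n 𝕜} (hB : B.IsHermitian) : (Φ B).IsHermitian :=
  (isHermitian_fromBlocks_iff.mp (hΦ _ _ _ _ hB.posSemidef_fromBlocks_one_self).isHermitian).2.1

/-- The Kadison–Schwarz inequality. -/
lemma mul_self_le_map_mul_self [Fintype m] [DecidableEq m] (h1 : Φ 1 = 1) {B : Matrix n n 𝕜}
    (hB : B.IsHermitian) : Φ B * Φ B ≤ Φ (B * B) := by
  have hΦB := (hΦ.isHermitian_map hB).eq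
  have hblock : (fromBlocks 1 (Φ B) (Φ B)ᴴ (Φ (B * B))).PosSemidef := by
    simpa only [h1, hΦB] using hΦ _ _ _ _ hB.posSemidef_fromBlocks_one_self
  have : Invertible (1 : Matrix m m 𝕜) := invertibleOne
  simpa only [le_iff, inv_one, mul_one, hΦB] using (PosDef.fromBlocks₁₁ _ _ PosDef.one).mp hblock

variable [Fintype m] [DecidableEq m] (h1 : Φ 1 = 1)
include h1

lemma map_sub_mul_self_eq_zero {B : Matrix n n 𝕜} (hB0 : 0 ≤ B) (hB1 : B ≤ 1)
    (hB : Φ B * Φ B = Φ B) : Φ (B - B * B) = 0 :=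
  le_antisymm
    (by
      rw [map_sub, sub_nonpos, ← hB]
      exact hΦ.mul_self_le_map_mul_self h1 hB0.posSemidef.isHermitian)
    (hΦ.posSemidef_map (sub_mul_self_nonneg hB0 hB1).posSemidef).nonneg

lemma compress_sub_mul_self_eq_zero {R : Matrix n n 𝕜}
    (hker : ∀ B : Matrix n n 𝕜, B.PosSemidef → (1 - B).PosSemidef → Φ B = 0 → R * B * R = 0)
    {B : Matrix n n 𝕜} (hB0 : 0 ≤ B) (hB1 : B ≤ 1) (hB : Φ B * Φ B = Φ B) :
    R * (B - B * B) * R = 0 :=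
  hker _ (sub_mul_self_nonneg hB0 hB1).posSemidef
    ((sub_le_self _ (IsSelfAdjoint.of_nonneg hB0).mul_self_nonneg).trans hB1)
    (hΦ.map_sub_mul_self_eq_zero h1 hB0 hB1 hB)

lemma isIdempotentElem_compress {R : Matrix n n 𝕜} (hR : IsStarProjection R)
    (hker : ∀ B : Matrix n n 𝕜, B.PosSemidef → (1 - B).PosSemidef → Φ B = 0 → R * B * R = 0)
    {B : Matrix n n 𝕜} (hB0 : 0 ≤ B) (hB1 : B ≤ 1)
    (hB : Φ (R * B * R) * Φ (R * B * R) = Φ (R * B * R)) : IsIdempotentElem (R * B * R) := by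
  set Q := R * B * R
  have hRQ : R * Q = Q := by simp only [Q, ← mul_assoc, hR.isIdempotentElem.eq]
  have hQR : Q * R = Q := by simp only [Q, mul_assoc, hR.isIdempotentElem.eq]
  have hQ0 : 0 ≤ Q := hR.isSelfAdjoint.conjugate_nonneg hB0
  have hQ1 : Q ≤ 1 := (hR.isSelfAdjoint.conjugate_le_conjugate hB1).trans
    (by rw [mul_one, hR.isIdempotentElem.eq]; exact hR.le_one)
  have hQ := hΦ.compress_sub_mul_self_eq_zero h1 hker hQ0 hQ1 hB
  rw [mul_sub, sub_mul, hRQ, ← mul_assoc, hRQ, hQR, mul_assoc, hQR] at hQ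
  exact (sub_eq_zero.mp hQ).symm

end IsTwoPositive

end Matrix

theorem support_projection_effect_decomposition_general
    (d k : ℕ)
    (Φ : Matrix (Fin d) (Fin d) ℂ →ₗ[ℂ] Matrix (Fin k) (Fin k) ℂ)
    (hunital : Φ 1 = 1)
    (h2pos : ∀ A B C D : Matrix (Fin d) (Fin d) ℂ,
      (Matrix.fromBlocks A B C D).PosSemidef →
      (Matrix.fromBlocks (Φ A) (Φ B) (Φ C) (Φ D)).PosSemidef)
    (R : Matrix (Fin d) (Fin d) ℂ)
    (hRh : R.IsHermitian) (hR2 : R * R = R)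
    (hsupp : ∀ A : Matrix (Fin d) (Fin d) ℂ, Φ A = Φ (R * A * R))
    (hker : ∀ A : Matrix (Fin d) (Fin d) ℂ, A.PosSemidef → (1 - A).PosSemidef →
      (Φ A = 0 ↔ R * A * R = 0))
    (A : Matrix (Fin d) (Fin d) ℂ)
    (hA0 : A.PosSemidef) (hA1 : (1 - A).PosSemidef)
    (hΦA2 : Φ A * Φ A = Φ A) :
    (R * A * R) * (R * A * R) = R * A * R ∧
    R * A = A * R ∧
    A = R * A * R + (1 - R) * A * (1 - R) := by
  have hΦ : IsTwoPositive Φ := h2pos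
  have hR : IsStarProjection R := ⟨hR2, hRh⟩
  have hA : IsSelfAdjoint A := hA0.isHermitian
  have hkerR (B : Matrix (Fin d) (Fin d) ℂ) (hB0 : B.PosSemidef) (hB1 : (1 - B).PosSemidef) :
      Φ B = 0 → R * B * R = 0 := (hker B hB0 hB1).mp
  have hsq : R * (A * A) * R = R * A * R := by
    have h := hΦ.compress_sub_mul_self_eq_zero hunital hkerR hA0.nonneg hA1 hΦA2
    rwa [mul_sub, sub_mul, sub_eq_zero, eq_comm] at h
  have hQ : IsIdempotentElem (R * A * R) :=
    hΦ.isIdempotentElem_compress hunital hR hkerR hA0.nonneg hA1 (by rwa [← hsupp])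
  have hcorner : R * A * (1 - R) = 0 := hR.mul_mul_one_sub_eq_zero hA hsq hQ
  exact ⟨hQ.eq, (commute_of_mul_mul_one_sub_eq_zero hR.isSelfAdjoint hA hcorner).eq,
    eq_add_of_mul_mul_one_sub_eq_zero hR.isSelfAdjoint hA hcorner⟩

/-- If Φ is a unital 2-positive map with support projection R and A is an effect
with Φ(A) a projection, then RAR is a projection, R commutes with A, and
A = RAR + R^⊥AR^⊥. -/
theorem support_projection_effect_decomposition
    (d k : ℕ)
    (Φ : Matrix (Fin d) (Fin d) ℂ →ₗ[ℂ] Matrix (Fin k) (Fin k) ℂ)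
    (hunital : Φ 1 = 1)
    (h2pos : ∀ A B C D : Matrix (Fin d) (Fin d) ℂ,
      (Matrix.fromBlocks A B C D).PosSemidef →
      (Matrix.fromBlocks (Φ A) (Φ B) (Φ C) (Φ D)).PosSemidef)
    (R : Matrix (Fin d) (Fin d) ℂ)
    (hRh : R.IsHermitian) (hR2 : R * R = R)
    (hΦR : Φ R = 1)
    (hsupp : ∀ A : Matrix (Fin d) (Fin d) ℂ, Φ A = Φ (R * A * R))
    (hker : ∀ A : Matrix (Fin d) (Fin d) ℂ, A.PosSemidef → (1 - A).PosSemidef →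
      (Φ A = 0 ↔ R * A * R = 0))
    (A : Matrix (Fin d) (Fin d) ℂ)
    (hA0 : A.PosSemidef) (hA1 : (1 - A).PosSemidef)
    (hΦAh : (Φ A).IsHermitian) (hΦA2 : Φ A * Φ A = Φ A) :
    (R * A * R) * (R * A * R) = R * A * R ∧
    R * A = A * R ∧
    A = R * A * R + (1 - R) * A * (1 - R) :=
  support_projection_effect_decomposition_general d k Φ hunital h2pos R hRh hR2 hsupp hker A hA0 hA1
    hΦA2
end

section
/- Let M = (M_1, ..., M_N) be a POVM on ℂ^d with Naimark dilation given by an isometry J : ℂ^d → H⊕ and a PVM P = (P_1, ..., P_N) on H⊕ with M_i = J* P_i J. Suppose N' = (N_{ij}) is a joint POVM with first margin M (∑_j N_{ij} = M_i). Then for each i, j there exists a unique positive operator P_{ij} ≤ P_i on H⊕ with P_{ij} = P_i P_{ij} P_i, ∑_j P_{ij} = P_i, and N_{ij} = J* P_{ij} J. -/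
/-!
Write `V i = P i * J`, so that `M i = (V i)ᴴ * V i`, and let `(M i)⁺` be the Moore–Penrose
inverse. Since `0 ≤ N i j ≤ M i`, the kernel of `M i` lies in that of `N i j`, hence
`Q i j := V i * (M i)⁺ * N i j * (M i)⁺ * (V i)ᴴ` compresses back to `N i j`. Minimality (the
ranges of the `V k` span) forces `V i * (M i)⁺ * (V i)ᴴ = P i`, which gives `∑ j, Q i j = P i` and
`Q i j ≤ P i`. A difference `X` of two solutions satisfies
`(V k)ᴴ * X * V l = Jᴴ * (P k * X * P l) * J = 0` for all `k, l`, so `X = 0`, again by minimality.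
-/

open Matrix
open scoped ComplexOrder

variable {𝕜 m n ι : Type*} [RCLike 𝕜] [Fintype n]

namespace Matrix

/-- For Hermitian `A` this is the Moore–Penrose inverse: the spectral inverse, with `0⁻¹ = 0`. -/
noncomputable def pinv [DecidableEq n] (A : Matrix n n 𝕜) : Matrix n n 𝕜 :=
  cfc (fun x : ℝ => x⁻¹) A

variable [DecidableEq n]

theorem isHermitian_pinv (A : Matrix n n 𝕜) : A.pinv.IsHermitian :=
  cfc_predicate _ A

theorem IsHermitian.mul_pinv_mul {A : Matrix n n 𝕜} (hA : A.IsHermitian) :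
    A * A.pinv * A = A := by
  have hcont : ∀ f : ℝ → ℝ, ContinuousOn f (spectrum ℝ A) :=
    fun f => Matrix.finite_real_spectrum.continuousOn f
  have hid : cfc (fun x : ℝ => x) A = A := cfc_id' ℝ A hA
  calc A * A.pinv * A = cfc (fun x : ℝ => x * x⁻¹ * x) A := by
        rw [cfc_mul _ _ A (hcont _) (hcont _), cfc_mul _ _ A (hcont _) (hcont _), hid, pinv]
    _ = cfc (fun x : ℝ => x) A := cfc_congr fun x _ => by
        rcases eq_or_ne x 0 with rfl | hx
        · simp
        · field_simp
    _ = A := hid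

theorem IsHermitian.mul_pinv_mul_of_ker_le {A : Matrix n n 𝕜} (hA : A.IsHermitian)
    {X : Matrix m n 𝕜} (hX : ∀ B : Matrix n n 𝕜, A * B = 0 → X * B = 0) :
    X * A.pinv * A = X := by
  have h := hX (1 - A.pinv * A) (by
    rw [Matrix.mul_sub, Matrix.mul_one, ← Matrix.mul_assoc, hA.mul_pinv_mul, sub_self])
  rw [Matrix.mul_sub, Matrix.mul_one, sub_eq_zero] at h
  rw [Matrix.mul_assoc, ← h]

open scoped MatrixOrder in
theorem PosSemidef.mul_eq_zero_of_le {A X : Matrix n n 𝕜} (hX : X.PosSemidef)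
    (hXA : (A - X).PosSemidef) {B : Matrix n n 𝕜} (hB : A * B = 0) : X * B = 0 := by
  obtain ⟨S, rfl⟩ := CStarAlgebra.nonneg_iff_eq_star_mul_self.mp hX.nonneg
  have hneg : Bᴴ * (A - star S * S) * B = -((S * B)ᴴ * (S * B)) := by
    rw [Matrix.mul_sub, Matrix.sub_mul, Matrix.mul_assoc, hB, Matrix.mul_zero, zero_sub,
      star_eq_conjTranspose]
    simp only [conjTranspose_mul, Matrix.mul_assoc]
  have hSB : (S * B)ᴴ * (S * B) = 0 := by
    have h := hXA.conjTranspose_mul_mul_same B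
    rw [hneg] at h
    exact le_antisymm (neg_nonneg.mp h.nonneg) (posSemidef_conjTranspose_mul_self _).nonneg
  rw [Matrix.mul_assoc, conjTranspose_mul_self_eq_zero.mp hSB, Matrix.mul_zero]

theorem eq_of_mul_eq_of_span_eq_top [Fintype m] {V : ι → Matrix n m 𝕜}
    (hV : Submodule.span 𝕜 {w | ∃ i φ, w = V i *ᵥ φ} = ⊤) {p : Type*} {A B : Matrix p n 𝕜}
    (h : ∀ i, A * V i = B * V i) : A = B := by
  refine Matrix.toLin'.injective (LinearMap.ext_on hV ?_)
  rintro _ ⟨i, φ, rfl⟩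
  simp only [Matrix.toLin'_apply, mulVec_mulVec, h i]

theorem eq_of_conjTranspose_mul_mul_eq_of_span_eq_top [Fintype m] {V : ι → Matrix n m 𝕜}
    (hV : Submodule.span 𝕜 {w | ∃ i φ, w = V i *ᵥ φ} = ⊤) {X Y : Matrix n n 𝕜}
    (h : ∀ k l, (V k)ᴴ * X * V l = (V k)ᴴ * Y * V l) : X = Y := by
  refine eq_of_mul_eq_of_span_eq_top hV fun l => ?_
  rw [← conjTranspose_inj]
  refine eq_of_mul_eq_of_span_eq_top hV fun k => ?_
  rw [← conjTranspose_inj]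
  simpa only [conjTranspose_mul, conjTranspose_conjTranspose, Matrix.mul_assoc] using h k l

end Matrix

section NaimarkDilation

variable {d D : Type*} [Fintype d] [Fintype D] {J : Matrix D d 𝕜} {P : ι → Matrix D D 𝕜}

theorem dilation_block_eq_of_compression_eq [DecidableEq D] [DecidableEq ι]
    (hPh : ∀ i, (P i).IsHermitian) (hP : ∀ i j, P i * P j = if i = j then P i else 0)
    (hmin : Submodule.span 𝕜 {w | ∃ i φ, w = (P i * J) *ᵥ φ} = ⊤) {i : ι} {X Y : Matrix D D 𝕜}
    (hX : X = P i * X * P i) (hY : Y = P i * Y * P i) (hXY : Jᴴ * X * J = Jᴴ * Y * J) :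
    X = Y := by
  refine eq_of_conjTranspose_mul_mul_eq_of_span_eq_top hmin fun k l => ?_
  have hblock : ∀ Z : Matrix D D 𝕜, Z = P i * Z * P i →
      (P k * J)ᴴ * Z * (P l * J) = Jᴴ * (P k * P i * Z * (P i * P l)) * J := fun Z hZ => by
    conv_lhs => rw [hZ]
    simp only [conjTranspose_mul, (hPh k).eq, Matrix.mul_assoc]
  rw [hblock X hX, hblock Y hY, hP, hP]
  split_ifs with hki hil
  · subst hki hil
    rwa [← hX, ← hY]
  all_goals simp only [Matrix.mul_zero, Matrix.zero_mul]

variable [DecidableEq d]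

/-- For `0 ≤ T ≤ Jᴴ * P i * J`, the block of `P i` whose compression by `J` is `T`. -/
noncomputable def naimarkLift (J : Matrix D d 𝕜) (P : ι → Matrix D D 𝕜) (i : ι)
    (T : Matrix d d 𝕜) : Matrix D D 𝕜 :=
  (P i * J * (Jᴴ * P i * J).pinv) * T * (P i * J * (Jᴴ * P i * J).pinv)ᴴ

theorem posSemidef_naimarkLift (i : ι) {T : Matrix d d 𝕜} (hT : T.PosSemidef) :
    (naimarkLift J P i T).PosSemidef :=
  hT.mul_mul_conjTranspose_same _

theorem naimarkLift_sub (i : ι) (S T : Matrix d d 𝕜) :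
    naimarkLift J P i (S - T) = naimarkLift J P i S - naimarkLift J P i T := by
  simp only [naimarkLift, Matrix.mul_sub, Matrix.sub_mul]

theorem naimarkLift_sum {κ : Type*} (i : ι) (s : Finset κ) (T : κ → Matrix d d 𝕜) :
    naimarkLift J P i (∑ k ∈ s, T k) = ∑ k ∈ s, naimarkLift J P i (T k) := by
  simp only [naimarkLift, Matrix.mul_sum, Matrix.sum_mul]

theorem proj_mul_naimarkLift_mul_proj {i : ι} (hPh : (P i).IsHermitian) (hPi : P i * P i = P i)
    (T : Matrix d d 𝕜) : P i * naimarkLift J P i T * P i = naimarkLift J P i T := by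
  set W := P i * J * (Jᴴ * P i * J).pinv
  have hleft : P i * W = W := by simp only [W, ← Matrix.mul_assoc, hPi]
  have hright : Wᴴ * P i = Wᴴ := by
    conv_rhs => rw [← hleft, conjTranspose_mul, hPh.eq]
  calc P i * naimarkLift J P i T * P i = (P i * W) * T * (Wᴴ * P i) := by
        simp only [naimarkLift, W, Matrix.mul_assoc]
    _ = naimarkLift J P i T := by rw [hleft, hright]; rfl

theorem conjTranspose_mul_naimarkLift_mul {i : ι} (hPh : (P i).IsHermitian)
    {T : Matrix d d 𝕜} (hT : T.IsHermitian)
    (hker : ∀ B : Matrix d d 𝕜, Jᴴ * P i * J * B = 0 → T * B = 0) :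
    Jᴴ * naimarkLift J P i T * J = T := by
  set M := Jᴴ * P i * J
  have hM : M.IsHermitian := isHermitian_conjTranspose_mul_mul J hPh
  have hTM : T * M.pinv * M = T := hM.mul_pinv_mul_of_ker_le hker
  have hMT : M * M.pinv * T = T := by
    simpa only [conjTranspose_mul, hT.eq, hM.eq, (isHermitian_pinv M).eq, Matrix.mul_assoc]
      using congrArg conjTranspose hTM
  calc Jᴴ * naimarkLift J P i T * J = (M * M.pinv) * T * (M * M.pinv)ᴴ := by
        simp only [naimarkLift, conjTranspose_mul, conjTranspose_conjTranspose, M,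
          Matrix.mul_assoc]
    _ = M * M.pinv * T * M.pinv * M := by
        simp only [conjTranspose_mul, hM.eq, (isHermitian_pinv M).eq, Matrix.mul_assoc]
    _ = T := by rw [hMT, hTM]

theorem naimarkLift_conjTranspose_mul_proj_mul [DecidableEq D] [DecidableEq ι]
    (hPh : ∀ i, (P i).IsHermitian) (hP : ∀ i j, P i * P j = if i = j then P i else 0)
    (hmin : Submodule.span 𝕜 {w | ∃ i φ, w = (P i * J) *ᵥ φ} = ⊤) (i : ι) :
    naimarkLift J P i (Jᴴ * P i * J) = P i := by
  set M := Jᴴ * P i * J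
  have hcross : ∀ k, (P i * J)ᴴ * (P k * J) = Jᴴ * (P i * P k) * J := fun k => by
    simp only [conjTranspose_mul, (hPh i).eq, Matrix.mul_assoc]
  have hPi : P i * P i = P i := by simpa using hP i i
  have hVM : P i * J * M.pinv * M = P i * J :=
    (isHermitian_conjTranspose_mul_mul J (hPh i)).mul_pinv_mul_of_ker_le fun B hB =>
      (conjTranspose_mul_self_mul_eq_zero _ B).mp (by rwa [hcross, hPi])
  have hlift : naimarkLift J P i M = P i * J * M.pinv * (P i * J)ᴴ := by
    rw [naimarkLift, hVM, conjTranspose_mul, (isHermitian_pinv M).eq]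
    simp only [Matrix.mul_assoc]
  refine eq_of_mul_eq_of_span_eq_top hmin fun k => ?_
  rw [hlift, Matrix.mul_assoc _ _ (P k * J), hcross, ← Matrix.mul_assoc (P i), hP]
  split_ifs
  · rw [hVM]
  · rw [Matrix.mul_zero, Matrix.zero_mul, Matrix.mul_zero, Matrix.zero_mul]

end NaimarkDilation

theorem joint_povm_from_dilation_general
    (d D N K : ℕ)
    (J : Matrix (Fin D) (Fin d) ℂ)
    (P : Fin N → Matrix (Fin D) (Fin D) ℂ)
    (hPh : ∀ i, (P i).IsHermitian)
    (hPorth : ∀ i j, P i * P j = if i = j then P i else 0)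
    (M : Fin N → Matrix (Fin d) (Fin d) ℂ)
    (hM : ∀ i, M i = Jᴴ * P i * J)
    (hmin : Submodule.span ℂ
      {w : Fin D → ℂ | ∃ i : Fin N, ∃ φ : Fin d → ℂ, w = (P i * J).mulVec φ} = ⊤)
    (Nj : Fin N → Fin K → Matrix (Fin d) (Fin d) ℂ)
    (hNjpos : ∀ i j, (Nj i j).PosSemidef)
    (hmarg : ∀ i, ∑ j, Nj i j = M i) :
    ∃! Q : Fin N → Fin K → Matrix (Fin D) (Fin D) ℂ,
      (∀ i j, (Q i j).PosSemidef ∧ (P i - Q i j).PosSemidef ∧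
        Q i j = P i * Q i j * P i ∧ Nj i j = Jᴴ * Q i j * J) ∧
      (∀ i, ∑ j, Q i j = P i) := by
  have hPi : ∀ i, P i * P i = P i := fun i => by simpa using hPorth i i
  have hNle : ∀ i j, (M i - Nj i j).PosSemidef := fun i j => by
    open scoped MatrixOrder in
    exact hmarg i ▸ Finset.single_le_sum (fun k _ => (hNjpos i k).nonneg) (Finset.mem_univ j)
  have hliftM : ∀ i, naimarkLift J P i (M i) = P i := fun i =>
    hM i ▸ naimarkLift_conjTranspose_mul_proj_mul hPh hPorth hmin i
  have hcompress : ∀ i j, Jᴴ * naimarkLift J P i (Nj i j) * J = Nj i j := fun i j =>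
    conjTranspose_mul_naimarkLift_mul (hPh i) (hNjpos i j).isHermitian fun _ hB =>
      (hNjpos i j).mul_eq_zero_of_le (hNle i j) (hM i ▸ hB)
  refine ⟨fun i j => naimarkLift J P i (Nj i j),
    ⟨fun i j => ⟨posSemidef_naimarkLift i (hNjpos i j), ?_,
      (proj_mul_naimarkLift_mul_proj (hPh i) (hPi i) _).symm, (hcompress i j).symm⟩,
    fun i => by rw [← naimarkLift_sum, hmarg i, hliftM i]⟩, ?_⟩
  · rw [← hliftM i, ← naimarkLift_sub]
    exact posSemidef_naimarkLift i (hNle i j)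
  · rintro Q ⟨hQ, -⟩
    funext i j
    obtain ⟨-, -, hQP, hNQ⟩ := hQ i j
    exact dilation_block_eq_of_compression_eq hPh hPorth hmin hQP
      (proj_mul_naimarkLift_mul_proj (hPh i) (hPi i) _).symm (by rw [← hNQ, hcompress])

/-- Structure of joint POVMs with a given first margin, via a minimal Naimark
dilation: every joint effect arises uniquely from a block decomposition of the
dilating PVM. -/
theorem joint_povm_from_dilation
    (d D N K : ℕ)
    (J : Matrix (Fin D) (Fin d) ℂ) (hJ : Jᴴ * J = 1)
    (P : Fin N → Matrix (Fin D) (Fin D) ℂ)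
    (hPh : ∀ i, (P i).IsHermitian)
    (hPorth : ∀ i j, P i * P j = if i = j then P i else 0)
    (hPsum : ∑ i, P i = 1)
    (M : Fin N → Matrix (Fin d) (Fin d) ℂ)
    (hM : ∀ i, M i = Jᴴ * P i * J)
    (hmin : Submodule.span ℂ
      {w : Fin D → ℂ | ∃ i : Fin N, ∃ φ : Fin d → ℂ, w = (P i * J).mulVec φ} = ⊤)
    (Nj : Fin N → Fin K → Matrix (Fin d) (Fin d) ℂ)
    (hNjpos : ∀ i j, (Nj i j).PosSemidef)
    (hNjsum : ∑ i, ∑ j, Nj i j = 1)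
    (hmarg : ∀ i, ∑ j, Nj i j = M i) :
    ∃! Q : Fin N → Fin K → Matrix (Fin D) (Fin D) ℂ,
      (∀ i j, (Q i j).PosSemidef ∧ (P i - Q i j).PosSemidef ∧
        Q i j = P i * Q i j * P i ∧ Nj i j = Jᴴ * Q i j * J) ∧
      (∀ i, ∑ j, Q i j = P i) :=
  joint_povm_from_dilation_general d D N K J P hPh hPorth M hM hmin Nj hNjpos hmarg
end

section
/- If M = (M_1, ..., M_N) is an extreme POVM on ℂ^d with minimal Naimark dilation (H⊕, P, J), and N, N' are two joint POVMs (N_{ij}), (N'_{ij}) both having first margin M and the same second margin (∑_i N_{ij} = ∑_i N'_{ij} for all j), then N = N'. In other words, an extreme observable has at most one joint observable with any given compatible observable. -/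
open Matrix
open scoped ComplexOrder

/-- An extreme POVM admits at most one joint observable with any compatible
observable: two joint POVMs with first margin M and equal second margins
coincide. -/
theorem extreme_unique_joint
    (d N K : ℕ)
    (M : Fin N → Matrix (Fin d) (Fin d) ℂ)
    (hMpos : ∀ i, (M i).PosSemidef) (hMsum : ∑ i, M i = 1)
    (hext : ∀ M' M'' : Fin N → Matrix (Fin d) (Fin d) ℂ,
        (∀ i, (M' i).PosSemidef) → ∑ i, M' i = 1 →
        (∀ i, (M'' i).PosSemidef) → ∑ i, M'' i = 1 →
        M = (1/2 : ℂ) • M' + (1/2 : ℂ) • M'' → M' = M ∧ M'' = M)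
    (Nj Nj' : Fin N → Fin K → Matrix (Fin d) (Fin d) ℂ)
    (hNjpos : ∀ i j, (Nj i j).PosSemidef)
    (hNj'pos : ∀ i j, (Nj' i j).PosSemidef)
    (hNjsum : ∑ i, ∑ j, Nj i j = 1)
    (hNj'sum : ∑ i, ∑ j, Nj' i j = 1)
    (hmarg1 : ∀ i, ∑ j, Nj i j = M i)
    (hmarg1' : ∀ i, ∑ j, Nj' i j = M i)
    (hmarg2 : ∀ j, ∑ i, Nj i j = ∑ i, Nj' i j) :
    Nj = Nj' := by
  funext i j0
  -- the perturbed POVMs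
  set M' : Fin N → Matrix (Fin d) (Fin d) ℂ :=
    fun i => M i + Nj i j0 - Nj' i j0 with hM'def
  set M'' : Fin N → Matrix (Fin d) (Fin d) ℂ :=
    fun i => M i - Nj i j0 + Nj' i j0 with hM''def
  have hsum_psd : ∀ (F : Fin N → Fin K → Matrix (Fin d) (Fin d) ℂ)
      (hF : ∀ i j, (F i j).PosSemidef) (i : Fin N),
      ((∑ j ∈ Finset.univ.erase j0, F i j)).PosSemidef := by
    intro F hF i
    exact Finset.sum_induction _ _ (fun a b ha hb => ha.add hb)
      Matrix.PosSemidef.zero (fun j _ => hF i j)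
  have herase : ∀ (F : Fin N → Fin K → Matrix (Fin d) (Fin d) ℂ) (i : Fin N),
      (∑ j, F i j) - F i j0 = ∑ j ∈ Finset.univ.erase j0, F i j := by
    intro F i
    rw [← Finset.add_sum_erase Finset.univ (F i) (Finset.mem_univ j0)]
    abel
  have hM'pos : ∀ i, (M' i).PosSemidef := by
    intro i
    have h1 : M' i = Nj i j0 + ∑ j ∈ Finset.univ.erase j0, Nj' i j := by
      rw [← herase Nj' i, hmarg1' i, hM'def]
      abel
    rw [h1]
    exact (hNjpos i j0).add (hsum_psd Nj' hNj'pos i)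
  have hM''pos : ∀ i, (M'' i).PosSemidef := by
    intro i
    have h1 : M'' i = Nj' i j0 + ∑ j ∈ Finset.univ.erase j0, Nj i j := by
      rw [← herase Nj i, hmarg1 i, hM''def]
      abel
    rw [h1]
    exact (hNj'pos i j0).add (hsum_psd Nj hNjpos i)
  have hM'sum : ∑ i, M' i = 1 := by
    simp only [hM'def]
    rw [Finset.sum_sub_distrib, Finset.sum_add_distrib, hMsum, hmarg2 j0]
    abel
  have hM''sum : ∑ i, M'' i = 1 := by
    simp only [hM''def]
    rw [Finset.sum_add_distrib, Finset.sum_sub_distrib, hMsum, hmarg2 j0]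
    abel
  have hmid : M = (1/2 : ℂ) • M' + (1/2 : ℂ) • M'' := by
    funext i
    simp only [hM'def, hM''def, Pi.add_apply, Pi.smul_apply]
    module
  have := (hext M' M'' hM'pos hM'sum hM''pos hM''sum hmid).1
  have h := congrFun this i
  simp only [hM'def] at h
  -- M i + Nj i j0 - Nj' i j0 = M i  implies  Nj i j0 = Nj' i j0
  have : Nj i j0 - Nj' i j0 = 0 := by
    have := h
    rw [add_sub_assoc] at this
    exact add_left_cancel (a := M i) (by rw [this, add_zero])
  exact sub_eq_zero.mp this
end

section
/- Let P = (P_1, ..., P_N) be a PVM on ℂ^d and M'' = (M''_1, ..., M''_K) a POVM on ℂ^d jointly measurable with P (there exists a joint POVM N with margins P and M''). Then each N_{ij} and each M''_j commutes with every P_k, and the joint POVM is unique, given by N_{ij} = P_i M''_j = P_i M''_j P_i. -/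
/-!
Each `N i j` is positive and lies below the projection `P i`, since the other `N i j'` are
positive and `∑ j, N i j = P i`. An element squeezed between `0` and a projection is absorbed by
it on both sides, `N i j = P i * N i j = N i j * P i`; orthogonality of the `P k` then makes
`N i j` commute with every `P k`, and multiplying the second marginal `∑ i, N i j = M'' j` by
`P i` isolates the single term `N i j`.
-/

open Matrix
open scoped ComplexOrder

section OrthogonalFamily

variable {R ι : Type*} [NonUnitalSemiring R] [DecidableEq ι] {p : ι → R}

theorem commute_of_mul_eq_self_of_orthogonal
    (hp : ∀ i j, p i * p j = if i = j then p i else 0) {a : R} {i : ι}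
    (hl : p i * a = a) (hr : a * p i = a) (k : ι) : Commute a (p k) := by
  by_cases hki : k = i
  · subst hki
    exact hr.trans hl.symm
  · have hright : a * p k = 0 := by
      rw [← hr, mul_assoc, hp i k, if_neg (Ne.symm hki), mul_zero]
    have hleft : p k * a = 0 := by
      rw [← hl, ← mul_assoc, hp k i, if_neg hki, zero_mul]
    exact hright.trans hleft.symm

theorem mul_sum_eq_of_mul_eq_self_of_orthogonal [Fintype ι]
    (hp : ∀ i j, p i * p j = if i = j then p i else 0) {a : ι → R}
    (hl : ∀ i, p i * a i = a i) (i : ι) : p i * ∑ k, a k = a i := by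
  rw [Finset.mul_sum, Finset.sum_eq_single i]
  · exact hl i
  · intro k _ hki
    rw [← hl k, ← mul_assoc, hp i k, if_neg (Ne.symm hki), zero_mul]
  · simp

end OrthogonalFamily

section MatrixOrder

open scoped MatrixOrder Matrix.Norms.L2Operator

theorem Matrix.PosSemidef.mul_eq_self_of_sum_eq_projection
    {n ι : Type*} [Fintype n] [DecidableEq n] [Fintype ι]
    {A : ι → Matrix n n ℂ} (hA : ∀ j, (A j).PosSemidef)
    {P : Matrix n n ℂ} (hPh : P.IsHermitian) (hPP : P * P = P) (hsum : ∑ j, A j = P) (j : ι) :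
    A j * P = A j ∧ P * A j = A j := by
  have hle : A j ≤ P :=
    hsum ▸ Finset.single_le_sum (fun k _ => (hA k).nonneg) (Finset.mem_univ j)
  exact IsStarProjection.mul_right_and_mul_left_of_nonneg_of_le
    ⟨hPP, hPh.isSelfAdjoint⟩ (hA j).nonneg hle

end MatrixOrder

theorem pvm_joint_commutes_and_unique_general
    (d N K : ℕ)
    (P : Fin N → Matrix (Fin d) (Fin d) ℂ)
    (hPh : ∀ i, (P i).IsHermitian)
    (hPorth : ∀ i j, P i * P j = if i = j then P i else 0)
    (M'' : Fin K → Matrix (Fin d) (Fin d) ℂ)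
    (Nj : Fin N → Fin K → Matrix (Fin d) (Fin d) ℂ)
    (hNjpos : ∀ i j, (Nj i j).PosSemidef)
    (hmarg1 : ∀ i, ∑ j, Nj i j = P i)
    (hmarg2 : ∀ j, ∑ i, Nj i j = M'' j) :
    (∀ i j k, Nj i j * P k = P k * Nj i j) ∧
    (∀ j k, M'' j * P k = P k * M'' j) ∧
    (∀ i j, Nj i j = P i * M'' j ∧ Nj i j = P i * M'' j * P i) := by
  have hNP : ∀ i j, Nj i j * P i = Nj i j ∧ P i * Nj i j = Nj i j := fun i =>
    PosSemidef.mul_eq_self_of_sum_eq_projection (hNjpos i) (hPh i)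
      (by simpa using hPorth i i) (hmarg1 i)
  have hcomm : ∀ i j k, Commute (Nj i j) (P k) := fun i j =>
    commute_of_mul_eq_self_of_orthogonal hPorth (hNP i j).2 (hNP i j).1
  have hPM : ∀ i j, P i * M'' j = Nj i j := fun i j => by
    rw [← hmarg2 j]
    exact mul_sum_eq_of_mul_eq_self_of_orthogonal hPorth (fun i => (hNP i j).2) i
  refine ⟨fun i j k => (hcomm i j k).eq, fun j k => ?_, fun i j => ⟨(hPM i j).symm, ?_⟩⟩
  · rw [← hmarg2 j]
    exact (Commute.sum_left _ _ _ fun i _ => hcomm i j k).eq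
  · rw [hPM, (hNP i j).1]

/-- Any observable jointly measurable with a PVM commutes with it, and the joint
observable is unique, given by products. -/
theorem pvm_joint_commutes_and_unique
    (d N K : ℕ)
    (P : Fin N → Matrix (Fin d) (Fin d) ℂ)
    (hPh : ∀ i, (P i).IsHermitian)
    (hPorth : ∀ i j, P i * P j = if i = j then P i else 0)
    (hPsum : ∑ i, P i = 1)
    (M'' : Fin K → Matrix (Fin d) (Fin d) ℂ)
    (hM''pos : ∀ j, (M'' j).PosSemidef)
    (hM''sum : ∑ j, M'' j = 1)
    (Nj : Fin N → Fin K → Matrix (Fin d) (Fin d) ℂ)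
    (hNjpos : ∀ i j, (Nj i j).PosSemidef)
    (hmarg1 : ∀ i, ∑ j, Nj i j = P i)
    (hmarg2 : ∀ j, ∑ i, Nj i j = M'' j) :
    (∀ i j k, Nj i j * P k = P k * Nj i j) ∧
    (∀ j k, M'' j * P k = P k * M'' j) ∧
    (∀ i j, Nj i j = P i * M'' j ∧ Nj i j = P i * M'' j * P i) :=
  pvm_joint_commutes_and_unique_general d N K P hPh hPorth M'' Nj hNjpos hmarg1 hmarg2
end

section
/- Fix positive reals p_{nm} > 0 for 1 ≤ n, m ≤ d, and define vectors in ℂ^d (with ONB |1⟩,...,|d⟩): f_{nn} = |n⟩, and for n < m, f_{nm} = |n⟩ + |m⟩ and f_{mn} = |n⟩ − i|m⟩. Then the d² matrices p_{nm}|f_{nm}⟩⟨f_{nm}|, 1 ≤ n, m ≤ d, are linearly independent and hence form a basis of the d×d complex matrix algebra. -/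
open Matrix
open scoped ComplexOrder

/-- The d² rank-1 matrices p_{nm}|f_{nm}⟩⟨f_{nm}| built from the vectors
f_{nn} = |n⟩, f_{nm} = |n⟩+|m⟩, f_{mn} = |n⟩−i|m⟩ (n<m) are linearly
independent and form a basis of M_d(ℂ). -/
theorem rank1_family_basis
    (d : ℕ) (p : Fin d → Fin d → ℝ) (hp : ∀ n m, 0 < p n m)
    (f : Fin d → Fin d → Fin d → ℂ)
    (hfd : ∀ n, f n n = (Pi.single n 1 : Fin d → ℂ))
    (hf1 : ∀ n m : Fin d, n < m → f n m = (Pi.single n 1 : Fin d → ℂ) + Pi.single m 1)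
    (hf2 : ∀ n m : Fin d, n < m → f m n = (Pi.single n 1 : Fin d → ℂ) - Complex.I • (Pi.single m 1 : Fin d → ℂ)) :
    LinearIndependent ℂ (fun nm : Fin d × Fin d =>
      (p nm.1 nm.2 : ℂ) • vecMulVec (f nm.1 nm.2) (star (f nm.1 nm.2)))
    ∧ Submodule.span ℂ (Set.range fun nm : Fin d × Fin d =>
      (p nm.1 nm.2 : ℂ) • vecMulVec (f nm.1 nm.2) (star (f nm.1 nm.2))) = ⊤ := by
  have hpne : ∀ n m, ((p n m : ℂ)) ≠ 0 := fun n m => by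
    exact_mod_cast (hp n m).ne'
  -- support of f n m is ⊆ {n, m}
  have hsupp : ∀ n m a : Fin d, a ≠ n → a ≠ m → f n m a = 0 := by
    intro n m a h1 h2
    rcases lt_trichotomy n m with h | h | h
    · rw [hf1 n m h]; simp [Pi.single_apply, h1, h2]
    · subst h; rw [hfd]; simp [Pi.single_apply, h1]
    · rw [hf2 m n h]; simp [Pi.single_apply, h1, h2]
  have hli : LinearIndependent ℂ (fun nm : Fin d × Fin d =>
      (p nm.1 nm.2 : ℂ) • vecMulVec (f nm.1 nm.2) (star (f nm.1 nm.2))) := by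
    rw [Fintype.linearIndependent_iff]
    intro g hg
    have key : ∀ a b : Fin d,
        ∑ nm : Fin d × Fin d,
          g nm * ((p nm.1 nm.2 : ℂ) * (f nm.1 nm.2 a * star (f nm.1 nm.2 b))) = 0 := by
      intro a b
      have h := congrFun (congrFun hg a) b
      simpa [Matrix.sum_apply, Matrix.smul_apply, vecMulVec_apply, smul_eq_mul, mul_assoc] using h
    have hoff : ∀ a b : Fin d, a < b → g (a, b) = 0 ∧ g (b, a) = 0 := by
      intro a b hab
      have hz : ∀ n m : Fin d, (n, m) ≠ (a, b) → (n, m) ≠ (b, a) →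
          f n m a = 0 ∨ f n m b = 0 := by
        intro n m h1 h2
        by_cases han : a = n
        · by_cases hbm : b = m
          · exact absurd (by simp [han, hbm]) h1
          · exact Or.inr (hsupp n m b (han ▸ hab.ne') hbm)
        · by_cases ham : a = m
          · by_cases hbn : b = n
            · exact absurd (by rw [hbn, ham]) h2
            · exact Or.inr (hsupp n m b hbn (ham ▸ hab.ne'))
          · exact Or.inl (hsupp n m a han ham)
      have hpairne : ((a, b) : Fin d × Fin d) ≠ (b, a) :=
        fun h => hab.ne (congrArg Prod.fst h)
      -- values of f on the relevant pairs
      have faa : f a b a = 1 := by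
        rw [hf1 a b hab]; simp [Pi.single_apply, hab.ne, hab.ne']
      have fab : f a b b = 1 := by
        rw [hf1 a b hab]; simp [Pi.single_apply, hab.ne, hab.ne']
      have fba : f b a a = 1 := by
        rw [hf2 a b hab]; simp [Pi.single_apply, hab.ne, hab.ne']
      have fbb : f b a b = -Complex.I := by
        rw [hf2 a b hab]; simp [Pi.single_apply, hab.ne, hab.ne']
      have reduce : ∀ x y : Fin d, (x = a ∧ y = b) ∨ (x = b ∧ y = a) →
          ∑ nm : Fin d × Fin d,
            g nm * ((p nm.1 nm.2 : ℂ) * (f nm.1 nm.2 x * star (f nm.1 nm.2 y)))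
          = ∑ nm ∈ ({(a, b), (b, a)} : Finset (Fin d × Fin d)),
            g nm * ((p nm.1 nm.2 : ℂ) * (f nm.1 nm.2 x * star (f nm.1 nm.2 y))) := by
        intro x y hxy
        refine (Finset.sum_subset (Finset.subset_univ _) ?_).symm
        intro nm _ hnm
        simp only [Finset.mem_insert, Finset.mem_singleton, not_or] at hnm
        have := hz nm.1 nm.2 (by simpa using hnm.1) (by simpa using hnm.2)
        rcases hxy with ⟨hx, hy⟩ | ⟨hx, hy⟩ <;> subst hx <;> subst hy <;>
          rcases this with h | h <;> simp [h]
      have e1 := key a b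
      rw [reduce a b (Or.inl ⟨rfl, rfl⟩), Finset.sum_pair hpairne] at e1
      have e2 := key b a
      rw [reduce b a (Or.inr ⟨rfl, rfl⟩), Finset.sum_pair hpairne] at e2
      simp only [faa, fab, fba, fbb, star_one, star_neg, Complex.star_def,
        Complex.conj_I, one_mul, mul_one, mul_neg, neg_neg] at e1 e2
      have h1 : g (a, b) * (p a b : ℂ) = 0 := by linear_combination (e1 + e2) / 2
      have hgab : g (a, b) = 0 := by
        rcases mul_eq_zero.mp h1 with h | h
        · exact h
        · exact absurd h (hpne a b)
      have h2 : g (b, a) * ((p b a : ℂ) * Complex.I) = 0 := by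
        linear_combination (e1 - e2) / 2
      have hgba : g (b, a) = 0 := by
        rcases mul_eq_zero.mp h2 with h | h
        · exact h
        · exact absurd h (mul_ne_zero (hpne b a) Complex.I_ne_zero)
      exact ⟨hgab, hgba⟩
    intro nm
    obtain ⟨n, m⟩ := nm
    rcases lt_trichotomy n m with h | h | h
    · exact (hoff n m h).1
    · subst h
      have e := key n n
      rw [Finset.sum_eq_single ((n, n) : Fin d × Fin d)] at e
      · have fnn : f n n n = 1 := by rw [hfd]; simp
        rw [fnn] at e
        simp only [star_one, mul_one] at e
        rcases mul_eq_zero.mp e with h | h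
        · exact h
        · exact absurd h (hpne n n)
      · intro nm _ hne
        obtain ⟨n', m'⟩ := nm
        rcases lt_trichotomy n' m' with h | h | h
        · rw [(hoff n' m' h).1]; ring
        · subst h
          have hn' : n ≠ n' := by
            intro hh; exact hne (by simp [hh])
          rw [hsupp n' n' n hn' hn']
          ring
        · rw [(hoff m' n' h).2]; ring
      · intro h; exact absurd (Finset.mem_univ _) h
    · exact (hoff m n h).2
  refine ⟨hli, ?_⟩
  rcases Nat.eq_zero_or_pos d with hd | hd
  · subst hd
    rw [Submodule.eq_top_iff']
    intro x
    have hx : x = 0 := by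
      ext i j
      exact i.elim0
    rw [hx]
    exact Submodule.zero_mem _
  · haveI : Nonempty (Fin d × Fin d) := ⟨(⟨0, hd⟩, ⟨0, hd⟩)⟩
    refine hli.span_eq_top_of_card_eq_finrank ?_
    simp [Module.finrank_matrix]
end

section
/- With the vectors f_{nm} of the previous construction and S = ∑_{n,m=1}^d p_{nm}|f_{nm}⟩⟨f_{nm}| (which is positive definite, hence invertible), define M_{nm} = p_{nm} |S^{-1/2} f_{nm}⟩⟨S^{-1/2} f_{nm}|. Then (M_{nm})_{n,m=1}^d is a POVM on ℂ^d (∑ M_{nm} = I) with d² rank-1 effects that is both extreme and informationally complete. -/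
/-!
Conjugation `X ↦ T * X * T` by the invertible matrix `T` sends `S` to `T S T = 1` and the
matrices `p_{nm} |f_{nm}⟩⟨f_{nm}|` to the effects `M_{nm}`; as a linear automorphism of `M_d(ℂ)`
it preserves spanning families. The unnormalized projectors already span `M_d(ℂ)`: by
polarization, `|e_n⟩⟨e_m|` and `|e_m⟩⟨e_n|` are combinations of the projectors onto `e_n`, `e_m`,
`e_n + e_m` and `e_n - i e_m`. A spanning family of `d²` matrices in the `d²`-dimensional space
`M_d(ℂ)` is linearly independent. Finally `S` is positive semidefinite as a positive combination
of rank-one projectors, and invertible because `T S T = 1`, hence positive definite.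
-/

open Matrix
open scoped ComplexOrder

theorem Submodule.span_range_units_mul_mul_eq_top {K A ι : Type*} [CommSemiring K] [Semiring A]
    [Algebra K A] {v : ι → A} (hv : span K (Set.range v) = ⊤) (a b : Aˣ) :
    span K (Set.range fun i => (a : A) * v i * b) = ⊤ := by
  have hsurj : Function.Surjective (LinearMap.mulLeftRight K ((a : A), (b : A))) := fun x =>
    ⟨↑a⁻¹ * x * ↑b⁻¹, by simp [mul_assoc]⟩
  rw [← LinearMap.range_eq_top] at hsurj
  rw [← hsurj, ← Submodule.map_top, ← hv, Submodule.map_span, ← Set.range_comp]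
  rfl

namespace Matrix

variable {n : Type*}

theorem vecMulVec_mulVec_star_mulVec [Fintype n] (A : Matrix n n ℂ) (v w : n → ℂ) :
    vecMulVec (A *ᵥ v) (star (A *ᵥ w)) = A * vecMulVec v (star w) * Aᴴ := by
  rw [star_mulVec, mul_vecMulVec, vecMulVec_mul]

theorem vecMulVec_star_mem_of_polarization {u w : n → ℂ} {V : Submodule ℂ (Matrix n n ℂ)}
    (hu : vecMulVec u (star u) ∈ V) (hw : vecMulVec w (star w) ∈ V)
    (hadd : vecMulVec (u + w) (star (u + w)) ∈ V)
    (hsub : vecMulVec (u - Complex.I • w) (star (u - Complex.I • w)) ∈ V) :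
    vecMulVec u (star w) ∈ V ∧ vecMulVec w (star u) ∈ V := by
  have hplus : vecMulVec u (star w) + vecMulVec w (star u) ∈ V := by
    convert V.sub_mem (V.sub_mem hadd hu) hw using 1
    simp only [star_add, add_vecMulVec, vecMulVec_add]
    abel
  have hminus : vecMulVec u (star w) - vecMulVec w (star u) ∈ V := by
    refine (V.smul_mem_iff Complex.I_ne_zero).1 ?_
    convert V.sub_mem (V.sub_mem hsub hu) hw using 1
    simp only [star_sub, star_smul, sub_vecMulVec, vecMulVec_sub, smul_vecMulVec, vecMulVec_smul,
      Complex.star_def, Complex.conj_I]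
    linear_combination (norm := module) Complex.I_mul_I • vecMulVec w (star w)
  have htwo : ∀ x ∈ V, (2 : ℂ)⁻¹ • x ∈ V := fun x hx => V.smul_mem _ hx
  constructor
  · convert htwo _ (V.add_mem hplus hminus) using 1
    module
  · convert htwo _ (V.sub_mem hplus hminus) using 1
    module

theorem span_range_vecMulVec_star_eq_top {ι : Type*} [Fintype ι] [LinearOrder ι]
    (f : ι → ι → ι → ℂ) (hfd : ∀ n, f n n = Pi.single n 1)
    (hf1 : ∀ n m, n < m → f n m = Pi.single n 1 + Pi.single m 1)
    (hf2 : ∀ n m, n < m → f m n = Pi.single n 1 - Complex.I • Pi.single m 1) :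
    Submodule.span ℂ (Set.range fun nm : ι × ι => vecMulVec (f nm.1 nm.2) (star (f nm.1 nm.2))) =
      ⊤ := by
  set V := Submodule.span ℂ
    (Set.range fun nm : ι × ι => vecMulVec (f nm.1 nm.2) (star (f nm.1 nm.2)))
  have hmem (n m : ι) : vecMulVec (f n m) (star (f n m)) ∈ V :=
    Submodule.subset_span ⟨(n, m), rfl⟩
  have hsingle_eq (a b : ι) :
      vecMulVec (Pi.single a 1 : ι → ℂ) (star (Pi.single b 1)) = single a b 1 := by
    rw [← Pi.single_star, star_one, single_eq_single_vecMulVec_single]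
  have hpair (a b : ι) (hab : a < b) : single a b (1 : ℂ) ∈ V ∧ single b a (1 : ℂ) ∈ V := by
    rw [← hsingle_eq, ← hsingle_eq]
    refine vecMulVec_star_mem_of_polarization ?_ ?_ ?_ ?_
    · exact hfd a ▸ hmem a a
    · exact hfd b ▸ hmem b b
    · exact hf1 a b hab ▸ hmem a b
    · exact hf2 a b hab ▸ hmem b a
  have hsingle (a b : ι) : single a b (1 : ℂ) ∈ V := by
    rcases lt_trichotomy a b with hab | rfl | hba
    · exact (hpair a b hab).1
    · exact hsingle_eq a a ▸ hfd a ▸ hmem a a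
    · exact (hpair b a hba).2
  refine eq_top_iff.2 fun A _ => ?_
  rw [matrix_eq_sum_single A]
  refine Submodule.sum_mem _ fun i _ => Submodule.sum_mem _ fun j _ => ?_
  simpa using V.smul_mem (A i j) (hsingle i j)

end Matrix

/-- Normalizing the rank-1 family by S^{-1/2}, where
S = ∑ p_{nm}|f_{nm}⟩⟨f_{nm}| is positive definite, yields a rank-1 POVM with d²
effects that is extreme (linearly independent effects) and informationally
complete (effects span M_d(ℂ)). -/
theorem extreme_infoComplete_rank1_povm_construction
    (d : ℕ) (p : Fin d → Fin d → ℝ) (hp : ∀ n m, 0 < p n m)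
    (f : Fin d → Fin d → Fin d → ℂ)
    (hfd : ∀ n, f n n = (Pi.single n 1 : Fin d → ℂ))
    (hf1 : ∀ n m : Fin d, n < m → f n m = (Pi.single n 1 : Fin d → ℂ) + Pi.single m 1)
    (hf2 : ∀ n m : Fin d, n < m → f m n = (Pi.single n 1 : Fin d → ℂ) - Complex.I • (Pi.single m 1 : Fin d → ℂ))
    (S T : Matrix (Fin d) (Fin d) ℂ)
    (hS : S = ∑ n, ∑ m, (p n m : ℂ) • vecMulVec (f n m) (star (f n m)))
    (hT : T.PosSemidef) (hTS : T * S * T = 1)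
    (M : Fin d → Fin d → Matrix (Fin d) (Fin d) ℂ)
    (hM : ∀ n m, M n m =
      (p n m : ℂ) • vecMulVec (T.mulVec (f n m)) (star (T.mulVec (f n m)))) :
    S.PosDef ∧
    (∑ n, ∑ m, M n m = 1) ∧
    LinearIndependent ℂ (fun nm : Fin d × Fin d => M nm.1 nm.2) ∧
    Submodule.span ℂ (Set.range fun nm : Fin d × Fin d => M nm.1 nm.2) = ⊤ := by
  have hS_psd : S.PosSemidef := hS ▸ posSemidef_sum _ fun n _ => posSemidef_sum _ fun m _ =>
    (posSemidef_vecMulVec_self_star (f n m)).smul (by exact_mod_cast (hp n m).le)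
  have hS_unit : IsUnit S := isUnit_of_mul_isUnit_right (IsUnit.of_mul_eq_one T hTS)
  have hM_conj (n m : Fin d) :
      M n m = T * ((p n m : ℂ) • vecMulVec (f n m) (star (f n m))) * T := by
    rw [hM, vecMulVec_mulVec_star_mulVec, hT.isHermitian.eq, Matrix.mul_smul, Matrix.smul_mul]
  have hspan : Submodule.span ℂ (Set.range fun nm : Fin d × Fin d => M nm.1 nm.2) = ⊤ := by
    let Tu := Units.mkOfMulEqOne T (S * T) (by rw [← mul_assoc, hTS])
    let pu (nm : Fin d × Fin d) : ℂˣ := Units.mk0 (p nm.1 nm.2) (by exact_mod_cast (hp _ _).ne')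
    simp only [hM_conj]
    exact Submodule.span_range_units_mul_mul_eq_top (Module.Basis.units_smul_span_eq_top
      (span_range_vecMulVec_star_eq_top f hfd hf1 hf2) (w := pu)) Tu Tu
  have hcard : Fintype.card (Fin d × Fin d) = Module.finrank ℂ (Matrix (Fin d) (Fin d) ℂ) := by
    simp [Module.finrank_matrix]
  refine ⟨hS_psd.posDef_iff_isUnit.2 hS_unit, ?_,
    linearIndependent_of_top_le_span_of_card_eq_finrank hspan.ge hcard, hspan⟩
  simp_rw [hM_conj, ← Finset.sum_mul, ← Finset.mul_sum, ← hS, hTS]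
end
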